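/- arXiv:1112.0634 — 5 statements merged into one kernel-verified Lean document; each statement's English description precedes it below -/
import Mathlib

section
/- Let C : ℤ × ℤ → ℂ satisfy (m-k)·C(m+k, n) + n·C(m, k+n) - n·C(k, n+m) = 0 for all integers m, n, k. Then C(m,n) = n/(m+n) · C(0, m+n) whenever m+n ≠ 0; consequently, if one defines g(n) = C(0,n)/n for n ≠ 0, the 2-cocycle C restricted to m+n ≠ 0 is the coboundary C(m,n) = n·g(m+n), i.e. it is absorbed by redefining J_m ↦ J_m - g(m) for m ≠ 0. -/
/-- The central term `C(m,n)` in `[L_m, J_n]` satisfies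
`C(m,n) = n/(m+n) · C(0,m+n)` for `m+n ≠ 0`, hence is a coboundary
`C(m,n) = n·g(m+n)` (absorbed by redefining `J_m ↦ J_m - g(m)`). -/
theorem stmt1 (C : ℤ × ℤ → ℂ)
    (h : ∀ m n k : ℤ,
      ((m - k : ℤ) : ℂ) * C (m + k, n) + (n : ℂ) * C (m, k + n)
        - (n : ℂ) * C (k, n + m) = 0) :
    (∀ m n : ℤ, m + n ≠ 0 →
      C (m, n) = (n : ℂ) / ((m + n : ℤ) : ℂ) * C (0, m + n)) ∧
    ∃ g : ℤ → ℂ, (∀ n : ℤ, n ≠ 0 → g n = C (0, n) / (n : ℂ)) ∧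
      ∀ m n : ℤ, m + n ≠ 0 → C (m, n) = (n : ℂ) * g (m + n) := by
  have key : ∀ m n : ℤ, m + n ≠ 0 →
      C (m, n) = (n : ℂ) / ((m + n : ℤ) : ℂ) * C (0, m + n) := by
    intro m n hmn
    have h0 := h m n 0
    simp only [sub_zero, add_zero, zero_add] at h0
    have hne : ((m + n : ℤ) : ℂ) ≠ 0 := by exact_mod_cast hmn
    have : ((m + n : ℤ) : ℂ) * C (m, n) = (n : ℂ) * C (0, m + n) := by
      rw [show n + m = m + n from add_comm n m] at h0
      push_cast
      linear_combination h0
    rw [div_mul_eq_mul_div, eq_div_iff hne]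
    linear_combination this
  refine ⟨key, fun n => C (0, n) / (n : ℂ), fun n _ => rfl, fun m n hmn => ?_⟩
  rw [key m n hmn, div_mul_eq_mul_div, mul_div_assoc]
end

section
/- Let f : ℤ → ℂ be antisymmetric in the sense f(n) records Y(n,-n) with Y(n,k) = δ_{n+k,0} f(n), f(-n) = -f(n), and suppose (2m+n)·f(-n) - (m-n)·f(m+n) = 0 for all integers m, n. Then f(n) = 0 for all n. -/
/-- Diagonal case `i = j` of the classification of central terms
`Y^{ii}_{nk} = δ_{n+k,0} f(n)` in `[P^i_m, P^i_n]`: the Jacobi constraints force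
`f = 0`. -/
theorem stmt2 (f : ℤ → ℂ) (hodd : ∀ n : ℤ, f (-n) = - f n)
    (h : ∀ m n : ℤ,
      ((2 * m + n : ℤ) : ℂ) * f (-n) - ((m - n : ℤ) : ℂ) * f (m + n) = 0) :
    ∀ n : ℤ, f n = 0 := by
  have h0 : f 0 = 0 := by
    have h1 := hodd 0; rw [neg_zero] at h1; linear_combination h1/2
  intro n
  rcases eq_or_ne n 0 with rfl | hn
  · exact h0
  · have := h n 0
    simp [h0] at this
    rcases this with h1 | h1
    · exact absurd (by exact_mod_cast h1) hn
    · exact h1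
end

section
/- The vector fields on ℝ³ (coordinates t, x₁, x₂) given by L_m = -t^{m+1}∂_t - (m+1)t^m(x₁∂₁ + x₂∂₂), P^i_m = -t^{m+1}∂_i, J_m = -t^m(x₁∂₂ - x₂∂₁) (for m ∈ ℤ, i = 1,2) satisfy the commutation relations of 𝔤: [L_m,L_n]=(m-n)L_{m+n}, [L_m,J_n]=-nJ_{m+n}, [L_m,P^i_n]=(m-n)P^i_{m+n}, [J_m,P^i_n]=Σ_j ε_{ij}P^j_{m+n}, [J_m,J_n]=[P^i_m,P^j_n]=0. -/
noncomputable section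

/-- Partial derivative in `t`. -/
def dt (f : ℝ × ℝ × ℝ → ℝ) (p : ℝ × ℝ × ℝ) : ℝ :=
  deriv (fun s => f (s, p.2.1, p.2.2)) p.1

/-- Partial derivative in `x₁`. -/
def d1 (f : ℝ × ℝ × ℝ → ℝ) (p : ℝ × ℝ × ℝ) : ℝ :=
  deriv (fun s => f (p.1, s, p.2.2)) p.2.1

/-- Partial derivative in `x₂`. -/
def d2 (f : ℝ × ℝ × ℝ → ℝ) (p : ℝ × ℝ × ℝ) : ℝ :=
  deriv (fun s => f (p.1, p.2.1, s)) p.2.2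

/-- `L_m = -t^{m+1}∂_t - (m+1)t^m (x₁∂₁ + x₂∂₂)`. -/
def Lop (m : ℤ) (f : ℝ × ℝ × ℝ → ℝ) (p : ℝ × ℝ × ℝ) : ℝ :=
  -(p.1 ^ (m + 1)) * dt f p
    - ((m + 1 : ℤ) : ℝ) * p.1 ^ m * (p.2.1 * d1 f p + p.2.2 * d2 f p)

/-- `P^i_m = -t^{m+1}∂_i`. -/
def Pop (i : Fin 2) (m : ℤ) (f : ℝ × ℝ × ℝ → ℝ) (p : ℝ × ℝ × ℝ) : ℝ :=
  -(p.1 ^ (m + 1)) * (if i = 0 then d1 f p else d2 f p)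

/-- `J_m = -t^m (x₁∂₂ - x₂∂₁)`. -/
def Jop (m : ℤ) (f : ℝ × ℝ × ℝ → ℝ) (p : ℝ × ℝ × ℝ) : ℝ :=
  -(p.1 ^ m) * (p.2.1 * d2 f p - p.2.2 * d1 f p)

/-- Commutator of differential operators. -/
def vfComm (A B : (ℝ × ℝ × ℝ → ℝ) → (ℝ × ℝ × ℝ → ℝ))
    (f : ℝ × ℝ × ℝ → ℝ) (p : ℝ × ℝ × ℝ) : ℝ :=
  A (B f) p - B (A f) p

/-- `ε_{12} = -ε_{21} = 1`. -/
def eps : Fin 2 → Fin 2 → ℤ := fun i j =>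
  if i = 0 ∧ j = 1 then 1 else if i = 1 ∧ j = 0 then -1 else 0

namespace GCAaux

def Xop (a0 a1 a2 : ℝ × ℝ × ℝ → ℝ) (g : ℝ × ℝ × ℝ → ℝ) (q : ℝ × ℝ × ℝ) : ℝ :=
  a0 q * dt g q + a1 q * d1 g q + a2 q * d2 g q

variable {g : ℝ × ℝ × ℝ → ℝ} {p : ℝ × ℝ × ℝ}

lemma dt_eq (hg : DifferentiableAt ℝ g p) : dt g p = fderiv ℝ g p (1, 0, 0) := by
  have hc : HasDerivAt (fun s : ℝ => (s, p.2.1, p.2.2)) ((1:ℝ), (0:ℝ), (0:ℝ)) p.1 :=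
    (hasDerivAt_id p.1).prodMk ((hasDerivAt_const _ _).prodMk (hasDerivAt_const _ _))
  exact (hg.hasFDerivAt.comp_hasDerivAt p.1 hc).deriv

lemma d1_eq (hg : DifferentiableAt ℝ g p) : d1 g p = fderiv ℝ g p (0, 1, 0) := by
  have hc : HasDerivAt (fun s : ℝ => (p.1, s, p.2.2)) ((0:ℝ), (1:ℝ), (0:ℝ)) p.2.1 :=
    (hasDerivAt_const _ _).prodMk ((hasDerivAt_id _).prodMk (hasDerivAt_const _ _))
  exact (hg.hasFDerivAt.comp_hasDerivAt p.2.1 hc).deriv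

lemma d2_eq (hg : DifferentiableAt ℝ g p) : d2 g p = fderiv ℝ g p (0, 0, 1) := by
  have hc : HasDerivAt (fun s : ℝ => (p.1, p.2.1, s)) ((0:ℝ), (0:ℝ), (1:ℝ)) p.2.2 :=
    (hasDerivAt_const _ _).prodMk ((hasDerivAt_const _ _).prodMk (hasDerivAt_id _))
  exact (hg.hasFDerivAt.comp_hasDerivAt p.2.2 hc).deriv

lemma comm_key {f : ℝ × ℝ × ℝ → ℝ} (hf : ContDiff ℝ (⊤ : ℕ∞) f)
    {a0 a1 a2 b0 b1 b2 : ℝ × ℝ × ℝ → ℝ}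
    (ha0 : DifferentiableAt ℝ a0 p) (ha1 : DifferentiableAt ℝ a1 p)
    (ha2 : DifferentiableAt ℝ a2 p)
    (hb0 : DifferentiableAt ℝ b0 p) (hb1 : DifferentiableAt ℝ b1 p)
    (hb2 : DifferentiableAt ℝ b2 p) :
    vfComm (Xop a0 a1 a2) (Xop b0 b1 b2) f p =
      (Xop a0 a1 a2 b0 p - Xop b0 b1 b2 a0 p) * dt f p
      + (Xop a0 a1 a2 b1 p - Xop b0 b1 b2 a1 p) * d1 f p
      + (Xop a0 a1 a2 b2 p - Xop b0 b1 b2 a2 p) * d2 f p := by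
  have hfd : Differentiable ℝ f := hf.differentiable (by simp)
  have hF : ∀ v : ℝ × ℝ × ℝ, ContDiff ℝ (⊤ : ℕ∞) (fun q => fderiv ℝ f q v) :=
    fun v => (hf.fderiv_right (by simp)).clm_apply contDiff_const
  have hFd : ∀ (v q : ℝ × ℝ × ℝ), DifferentiableAt ℝ (fun q => fderiv ℝ f q v) q :=
    fun v q => ((hF v).differentiable (by simp)) q
  have hpdpd : ∀ u v : ℝ × ℝ × ℝ,
      fderiv ℝ (fun q => fderiv ℝ f q v) p u = fderiv ℝ (fderiv ℝ f) p u v := by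
    intro u v
    rw [fderiv_clm_apply ((hf.fderiv_right (m := 1) (by exact WithTop.coe_le_coe.mpr le_top)).differentiable (by simp) p)
      (differentiableAt_const v)]
    simp
  have hsym : IsSymmSndFDerivAt ℝ f p := hf.contDiffAt.isSymmSndFDerivAt (by norm_num; exact WithTop.coe_le_coe.mpr le_top)
  set e0 : ℝ × ℝ × ℝ := (1, 0, 0) with he0
  set e1 : ℝ × ℝ × ℝ := (0, 1, 0) with he1
  set e2 : ℝ × ℝ × ℝ := (0, 0, 1) with he2
  have hX : ∀ c0 c1 c2 : ℝ × ℝ × ℝ → ℝ, Xop c0 c1 c2 f =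
      fun q => c0 q * fderiv ℝ f q e0 + c1 q * fderiv ℝ f q e1 + c2 q * fderiv ℝ f q e2 := by
    intro c0 c1 c2; funext q
    simp only [Xop, dt_eq (hfd q), d1_eq (hfd q), d2_eq (hfd q)]
    rfl
  have key : ∀ (c0 c1 c2 : ℝ × ℝ × ℝ → ℝ),
      DifferentiableAt ℝ c0 p → DifferentiableAt ℝ c1 p → DifferentiableAt ℝ c2 p →
      ∀ u : ℝ × ℝ × ℝ, fderiv ℝ (Xop c0 c1 c2 f) p u =
        fderiv ℝ c0 p u * fderiv ℝ f p e0 + c0 p * fderiv ℝ (fderiv ℝ f) p u e0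
        + fderiv ℝ c1 p u * fderiv ℝ f p e1 + c1 p * fderiv ℝ (fderiv ℝ f) p u e1
        + fderiv ℝ c2 p u * fderiv ℝ f p e2 + c2 p * fderiv ℝ (fderiv ℝ f) p u e2 := by
    intro c0 c1 c2 hc0 hc1 hc2 u
    rw [hX]
    show fderiv ℝ ((c0 * fun q => fderiv ℝ f q e0) + (c1 * fun q => fderiv ℝ f q e1)
      + (c2 * fun q => fderiv ℝ f q e2)) p u = _
    rw [fderiv_add (((hc0.mul (hFd e0 p)).add (hc1.mul (hFd e1 p)))) (hc2.mul (hFd e2 p)),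
      fderiv_add (hc0.mul (hFd e0 p)) (hc1.mul (hFd e1 p)),
      fderiv_mul hc0 (hFd e0 p), fderiv_mul hc1 (hFd e1 p), fderiv_mul hc2 (hFd e2 p)]
    simp only [ContinuousLinearMap.add_apply, ContinuousLinearMap.smul_apply, smul_eq_mul,
      hpdpd]
    ring
  have hdiffX : ∀ (c0 c1 c2 : ℝ × ℝ × ℝ → ℝ),
      DifferentiableAt ℝ c0 p → DifferentiableAt ℝ c1 p → DifferentiableAt ℝ c2 p →
      DifferentiableAt ℝ (Xop c0 c1 c2 f) p := by
    intro c0 c1 c2 hc0 hc1 hc2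
    rw [hX]
    exact ((hc0.mul (hFd e0 p)).add (hc1.mul (hFd e1 p))).add (hc2.mul (hFd e2 p))
  have hdb := hdiffX b0 b1 b2 hb0 hb1 hb2
  have hda := hdiffX a0 a1 a2 ha0 ha1 ha2
  show Xop a0 a1 a2 (Xop b0 b1 b2 f) p - Xop b0 b1 b2 (Xop a0 a1 a2 f) p = _
  rw [show Xop a0 a1 a2 (Xop b0 b1 b2 f) p =
      a0 p * dt (Xop b0 b1 b2 f) p + a1 p * d1 (Xop b0 b1 b2 f) p
        + a2 p * d2 (Xop b0 b1 b2 f) p from rfl,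
    show Xop b0 b1 b2 (Xop a0 a1 a2 f) p =
      b0 p * dt (Xop a0 a1 a2 f) p + b1 p * d1 (Xop a0 a1 a2 f) p
        + b2 p * d2 (Xop a0 a1 a2 f) p from rfl,
    dt_eq hdb, d1_eq hdb, d2_eq hdb, dt_eq hda, d1_eq hda, d2_eq hda,
    key b0 b1 b2 hb0 hb1 hb2, key b0 b1 b2 hb0 hb1 hb2, key b0 b1 b2 hb0 hb1 hb2,
    key a0 a1 a2 ha0 ha1 ha2, key a0 a1 a2 ha0 ha1 ha2, key a0 a1 a2 ha0 ha1 ha2]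
  simp only [Xop, dt_eq ha0, dt_eq ha1, dt_eq ha2, dt_eq hb0, dt_eq hb1, dt_eq hb2,
    d1_eq ha0, d1_eq ha1, d1_eq ha2, d1_eq hb0, d1_eq hb1, d1_eq hb2,
    d2_eq ha0, d2_eq ha1, d2_eq ha2, d2_eq hb0, d2_eq hb1, d2_eq hb2,
    dt_eq (hfd p), d1_eq (hfd p), d2_eq (hfd p)]
  rw [hsym e1 e0, hsym e2 e0, hsym e2 e1]
  ring

def A (c : ℝ) (k : ℤ) : ℝ × ℝ × ℝ → ℝ := fun q => c * q.1 ^ k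
def B1 (c : ℝ) (k : ℤ) : ℝ × ℝ × ℝ → ℝ := fun q => c * q.1 ^ k * q.2.1
def B2 (c : ℝ) (k : ℤ) : ℝ × ℝ × ℝ → ℝ := fun q => c * q.1 ^ k * q.2.2
def Z : ℝ × ℝ × ℝ → ℝ := fun _ => 0

variable {c : ℝ} {k : ℤ}

lemma A_diff (hp : p.1 ≠ 0) : DifferentiableAt ℝ (A c k) p :=
  (differentiableAt_fst.zpow (Or.inl hp)).const_mul c
lemma B1_diff (hp : p.1 ≠ 0) : DifferentiableAt ℝ (B1 c k) p :=
  (A_diff hp).mul differentiableAt_snd.fst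
lemma B2_diff (hp : p.1 ≠ 0) : DifferentiableAt ℝ (B2 c k) p :=
  (A_diff hp).mul differentiableAt_snd.snd
lemma Z_diff : DifferentiableAt ℝ Z p := differentiableAt_const 0

lemma dt_A (hp : p.1 ≠ 0) : dt (A c k) p = c * (k * p.1 ^ (k - 1)) :=
  (((hasDerivAt_zpow k p.1 (Or.inl hp)).const_mul c)).deriv
lemma d1_A : d1 (A c k) p = 0 := by
  simp [d1, A]
lemma d2_A : d2 (A c k) p = 0 := by
  simp [d2, A]
lemma dt_B1 (hp : p.1 ≠ 0) : dt (B1 c k) p = c * (k * p.1 ^ (k - 1)) * p.2.1 := by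
  have := (((hasDerivAt_zpow k p.1 (Or.inl hp)).const_mul c)).mul_const p.2.1
  exact this.deriv
lemma d1_B1 : d1 (B1 c k) p = c * p.1 ^ k := by
  have := ((hasDerivAt_id p.2.1).const_mul (c * p.1 ^ k)).deriv
  rw [mul_one] at this
  exact this
lemma d2_B1 : d2 (B1 c k) p = 0 := by
  simp [d2, B1]
lemma dt_B2 (hp : p.1 ≠ 0) : dt (B2 c k) p = c * (k * p.1 ^ (k - 1)) * p.2.2 := by
  have := (((hasDerivAt_zpow k p.1 (Or.inl hp)).const_mul c)).mul_const p.2.2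
  exact this.deriv
lemma d1_B2 : d1 (B2 c k) p = 0 := by
  simp [d1, B2]
lemma d2_B2 : d2 (B2 c k) p = c * p.1 ^ k := by
  have := ((hasDerivAt_id p.2.2).const_mul (c * p.1 ^ k)).deriv
  rw [mul_one] at this
  exact this
lemma dt_Z : dt Z p = 0 := by simp [dt, Z]
lemma d1_Z : d1 Z p = 0 := by simp [d1, Z]
lemma d2_Z : d2 Z p = 0 := by simp [d2, Z]

lemma L_eq (m : ℤ) :
    Lop m = Xop (A (-1) (m + 1)) (B1 (-((m : ℝ) + 1)) m) (B2 (-((m : ℝ) + 1)) m) := by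
  funext g q
  simp only [Lop, Xop, A, B1, B2]
  push_cast
  ring

lemma P0_eq (n : ℤ) : Pop 0 n = Xop Z (A (-1) (n + 1)) Z := by
  funext g q
  simp only [Pop, Xop, A, Z]
  norm_num

lemma P1_eq (n : ℤ) : Pop 1 n = Xop Z Z (A (-1) (n + 1)) := by
  funext g q
  simp only [Pop, Xop, A, Z]
  norm_num

lemma J_eq (m : ℤ) : Jop m = Xop Z (B2 1 m) (B1 (-1) m) := by
  funext g q
  simp only [Jop, Xop, B1, B2, Z]
  ring

end GCAaux
open GCAaux

/-- The vector fields `L_m, J_m, P^i_m` on `ℝ³` satisfy the commutation relations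
of the infinite-dimensional Galilean conformal algebra `𝔤` (on smooth functions,
at points with `t ≠ 0`). -/
theorem stmt6 (f : ℝ × ℝ × ℝ → ℝ) (hf : ContDiff ℝ (⊤ : ℕ∞) f)
    (p : ℝ × ℝ × ℝ) (hp : p.1 ≠ 0) :
    (∀ m n : ℤ, vfComm (Lop m) (Lop n) f p = ((m - n : ℤ) : ℝ) * Lop (m + n) f p) ∧
    (∀ m n : ℤ, vfComm (Lop m) (Jop n) f p = ((-n : ℤ) : ℝ) * Jop (m + n) f p) ∧
    (∀ (m n : ℤ) (i : Fin 2),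
      vfComm (Lop m) (Pop i n) f p = ((m - n : ℤ) : ℝ) * Pop i (m + n) f p) ∧
    (∀ (m n : ℤ) (i : Fin 2),
      vfComm (Jop m) (Pop i n) f p = ∑ j : Fin 2, ((eps i j : ℤ) : ℝ) * Pop j (m + n) f p) ∧
    (∀ m n : ℤ, vfComm (Jop m) (Jop n) f p = 0) ∧
    (∀ (m n : ℤ) (i j : Fin 2), vfComm (Pop i m) (Pop j n) f p = 0) := by
  have hfin : ∀ j : Fin 2, j = 0 ∨ j = 1 := by decide
  refine ⟨?_, ?_, ?_, ?_, ?_, ?_⟩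
  · intro m n
    rw [L_eq m, L_eq n,
      comm_key hf (A_diff hp) (B1_diff hp) (B2_diff hp) (A_diff hp) (B1_diff hp) (B2_diff hp)]
    simp only [Xop, Lop, dt_A hp, dt_B1 hp, dt_B2 hp, d1_A, d2_A, d1_B1, d2_B1, d1_B2, d2_B2,
      A, B1, B2, Z]
    try push_cast
    try simp only [zpow_sub₀ hp, zpow_add₀ hp, zpow_one]
    first
    | ring1
    | (field_simp [hp]; ring1)
    | (field_simp [hp]; ring_nf)
  · intro m n
    rw [L_eq m, J_eq n,
      comm_key hf (A_diff hp) (B1_diff hp) (B2_diff hp) Z_diff (B2_diff hp) (B1_diff hp)]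
    simp only [Xop, Jop, dt_A hp, dt_B1 hp, dt_B2 hp, d1_A, d2_A, d1_B1, d2_B1, d1_B2, d2_B2,
      dt_Z, d1_Z, d2_Z, A, B1, B2, Z]
    try push_cast
    try simp only [zpow_sub₀ hp, zpow_add₀ hp, zpow_one]
    first
    | ring1
    | (field_simp [hp]; ring1)
    | (field_simp [hp]; ring_nf)
  · intro m n i
    rcases hfin i with hi | hi <;> subst hi
    · rw [P0_eq n, L_eq m,
        comm_key hf (A_diff hp) (B1_diff hp) (B2_diff hp) Z_diff (A_diff hp) Z_diff]
      simp only [Xop, Pop, dt_A hp, dt_B1 hp, dt_B2 hp, d1_A, d2_A, d1_B1, d2_B1, d1_B2, d2_B2,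
        dt_Z, d1_Z, d2_Z, A, B1, B2, Z, if_pos rfl]
      try push_cast
      try simp only [zpow_sub₀ hp, zpow_add₀ hp, zpow_one]
      first
      | ring1
      | (field_simp [hp]; ring1)
      | (field_simp [hp]; ring_nf)
    · rw [P1_eq n, L_eq m,
        comm_key hf (A_diff hp) (B1_diff hp) (B2_diff hp) Z_diff Z_diff (A_diff hp)]
      simp only [Xop, Pop, dt_A hp, dt_B1 hp, dt_B2 hp, d1_A, d2_A, d1_B1, d2_B1, d1_B2, d2_B2,
        dt_Z, d1_Z, d2_Z, A, B1, B2, Z]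
      try norm_num
      try push_cast
      try simp only [zpow_sub₀ hp, zpow_add₀ hp, zpow_one]
      first
      | ring1
      | (field_simp [hp]; ring1)
      | (field_simp [hp]; ring_nf)
  · intro m n i
    rcases hfin i with hi | hi <;> subst hi
    · rw [J_eq m, P0_eq n,
        comm_key hf Z_diff (B2_diff hp) (B1_diff hp) Z_diff (A_diff hp) Z_diff]
      simp only [Fin.sum_univ_two, Xop, Pop, dt_A hp, dt_B1 hp, dt_B2 hp, d1_A, d2_A,
        d1_B1, d2_B1, d1_B2, d2_B2, dt_Z, d1_Z, d2_Z, A, B1, B2, Z,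
        show eps 0 0 = 0 by decide, show eps 0 1 = 1 by decide,
        show eps 1 0 = -1 by decide, show eps 1 1 = 0 by decide,
        if_pos (rfl : (0:Fin 2) = 0), if_neg (by decide : ¬ (1:Fin 2) = 0)]
      try push_cast
      try simp only [zpow_sub₀ hp, zpow_add₀ hp, zpow_one]
      first
      | ring1
      | (field_simp [hp]; ring1)
      | (field_simp [hp]; ring_nf)
    · rw [J_eq m, P1_eq n,
        comm_key hf Z_diff (B2_diff hp) (B1_diff hp) Z_diff Z_diff (A_diff hp)]
      simp only [Fin.sum_univ_two, Xop, Pop, dt_A hp, dt_B1 hp, dt_B2 hp, d1_A, d2_A,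
        d1_B1, d2_B1, d1_B2, d2_B2, dt_Z, d1_Z, d2_Z, A, B1, B2, Z,
        show eps 0 0 = 0 by decide, show eps 0 1 = 1 by decide,
        show eps 1 0 = -1 by decide, show eps 1 1 = 0 by decide,
        if_pos (rfl : (0:Fin 2) = 0), if_neg (by decide : ¬ (1:Fin 2) = 0)]
      try push_cast
      try simp only [zpow_sub₀ hp, zpow_add₀ hp, zpow_one]
      first
      | ring1
      | (field_simp [hp]; ring1)
      | (field_simp [hp]; ring_nf)
  · intro m n
    rw [J_eq m, J_eq n,
      comm_key hf Z_diff (B2_diff hp) (B1_diff hp) Z_diff (B2_diff hp) (B1_diff hp)]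
    simp only [Xop, dt_A hp, dt_B1 hp, dt_B2 hp, d1_A, d2_A, d1_B1, d2_B1, d1_B2, d2_B2,
      dt_Z, d1_Z, d2_Z, A, B1, B2, Z]
    ring
  · intro m n i j
    rcases hfin i with hi | hi <;> rcases hfin j with hj | hj <;> subst hi <;> subst hj <;>
      [rw [P0_eq m, P0_eq n,
          comm_key hf Z_diff (A_diff hp) Z_diff Z_diff (A_diff hp) Z_diff];
       rw [P0_eq m, P1_eq n,
          comm_key hf Z_diff (A_diff hp) Z_diff Z_diff Z_diff (A_diff hp)];
       rw [P1_eq m, P0_eq n,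
          comm_key hf Z_diff Z_diff (A_diff hp) Z_diff (A_diff hp) Z_diff];
       rw [P1_eq m, P1_eq n,
          comm_key hf Z_diff Z_diff (A_diff hp) Z_diff Z_diff (A_diff hp)]] <;>
      simp only [Xop, dt_A hp, d1_A, d2_A, dt_Z, d1_Z, d2_Z, A, Z] <;> ring


end
end

section
/- Every central extension of 𝔤̌ of the form [L_m,L_n]=(m-n)L_{m+n}+f(m,n)z, [J_m,J_n]=g(m,n)z, [Θ_m,Θ_n]=h(m,n)z (z central, other brackets unmodified) satisfies, after equivalence: f(m,n) = (α/12)m(m²-1)δ_{m+n,0}, g(m,n) = βmδ_{m+n,0}, h(m,n) = 0 for some constants α, β ∈ ℂ. -/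
/-!
Restricting the Jacobi identity to special triples collapses the cocycle conditions to
one-variable recursions. For `f`, the triple `(m, n, 0)` gives `(m+n) f(m,n) = (n-m) f(0,m+n)`,
so off the diagonal `m + n = 0` the cocycle is the coboundary of `φ(s) = -f(0,s)/s`; the triple
`(m, 1, -m-1)` gives a first-order recursion for `d(m) = f(m,-m)` whose solutions are spanned
by `m` (again a coboundary) and `m³ - m`. For `g`, the triple `(m, n, 1)` gives
`g(n,s) = n g(1, n+s-1)`, which together with antisymmetry kills `g` off the diagonal.
-/

structure IsWittCocycle (f : ℤ → ℤ → ℂ) : Prop where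
  antisymm : ∀ m n : ℤ, f m n = - f n m
  jacobi : ∀ m n k : ℤ,
    ((n - k : ℤ) : ℂ) * f m (n + k) + ((k - m : ℤ) : ℂ) * f n (k + m)
      + ((m - n : ℤ) : ℂ) * f k (m + n) = 0

namespace IsWittCocycle

variable {f : ℤ → ℤ → ℂ}

theorem add_mul_apply (hf : IsWittCocycle f) (m n : ℤ) :
    ((m + n : ℤ) : ℂ) * f m n = ((n - m : ℤ) : ℂ) * f 0 (m + n) := by
  have h := hf.jacobi m n 0
  rw [add_zero, zero_add, hf.antisymm n m] at h
  push_cast at h ⊢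
  linear_combination h

theorem apply_zero_zero (hf : IsWittCocycle f) : f 0 0 = 0 := by
  linear_combination hf.antisymm 0 0 / 2

theorem diagonal_recursion (hf : IsWittCocycle f) (m n : ℤ) :
    ((m + 2 * n : ℤ) : ℂ) * f m (-m) - ((2 * m + n : ℤ) : ℂ) * f n (-n)
      = ((m - n : ℤ) : ℂ) * f (m + n) (-(m + n)) := by
  have h := hf.jacobi m n (-(m + n))
  rw [show n + -(m + n) = -m by ring, show -(m + n) + m = -n by ring,
    hf.antisymm (-(m + n)) (m + n)] at h
  push_cast at h ⊢
  linear_combination h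

/-- Normalised so that `f(m,-m) = (c/12)(m³ - m) + m f(1,-1)`, see `IsWittCocycle.apply_neg`. -/
def centralCharge (f : ℤ → ℤ → ℂ) : ℂ := 2 * (f 2 (-2) - 2 * f 1 (-1))

theorem apply_neg_of_nonneg (hf : IsWittCocycle f) {m : ℤ} (hm : 0 ≤ m) :
    f m (-m) = centralCharge f * ((m : ℂ) ^ 3 - m) / 12 + m * f 1 (-1) := by
  obtain rfl | rfl | hm2 : m = 0 ∨ m = 1 ∨ 2 ≤ m := by omega
  · simp [hf.apply_zero_zero]
  · simp
  induction m, hm2 using Int.leInduction with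
  | base => simp only [centralCharge]; push_cast; ring
  | succ m hm2 ih =>
    have hrec := hf.diagonal_recursion m 1
    rw [ih (by omega)] at hrec
    have hm1 : ((m : ℂ) - 1) ≠ 0 := by
      rw [sub_ne_zero]; exact_mod_cast (show m ≠ 1 by omega)
    push_cast at hrec ⊢
    refine mul_left_cancel₀ hm1 ?_
    linear_combination -hrec

theorem apply_neg (hf : IsWittCocycle f) (m : ℤ) :
    f m (-m) = centralCharge f * ((m : ℂ) ^ 3 - m) / 12 + m * f 1 (-1) := by
  rcases le_or_gt 0 m with hm | hm
  · exact hf.apply_neg_of_nonneg hm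
  · have h := hf.apply_neg_of_nonneg (m := -m) (by omega)
    rw [neg_neg] at h
    rw [hf.antisymm, h]
    push_cast
    ring

theorem eq_virasoro_add_coboundary (hf : IsWittCocycle f) :
    ∃ φ : ℤ → ℂ, ∀ m n : ℤ, f m n =
      (centralCharge f / 12) * ((m * (m ^ 2 - 1) : ℤ) : ℂ) * (if m + n = 0 then 1 else 0)
        + ((m - n : ℤ) : ℂ) * φ (m + n) := by
  refine ⟨fun s => if s = 0 then f 1 (-1) / 2 else - f 0 s / s, fun m n => ?_⟩
  by_cases hmn : m + n = 0
  · obtain rfl : n = -m := by omega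
    simp only [add_neg_cancel, if_true]
    rw [hf.apply_neg m]
    push_cast
    ring
  · have hmn' : ((m + n : ℤ) : ℂ) ≠ 0 := Int.cast_ne_zero.mpr hmn
    have h := hf.add_mul_apply m n
    simp only [hmn, if_false]
    push_cast at h hmn' ⊢
    field_simp
    linear_combination 12 * h

end IsWittCocycle

namespace CurrentCocycle

variable {g : ℤ → ℤ → ℂ}

theorem apply_eq_mul_apply_one
    (hg : ∀ m n k : ℤ, (k : ℂ) * g n (m + k) - (n : ℂ) * g k (m + n) = 0)
    (n s : ℤ) : g n s = n * g 1 (n + s - 1) := by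
  have h := hg (s - 1) n 1
  rw [sub_add_cancel, show s - 1 + n = n + s - 1 by ring] at h
  push_cast at h
  linear_combination h

theorem apply_eq_zero_of_add_ne_zero (hg_anti : ∀ m n : ℤ, g m n = - g n m)
    (hg : ∀ m n k : ℤ, (k : ℂ) * g n (m + k) - (n : ℂ) * g k (m + n) = 0)
    {n s : ℤ} (hns : n + s ≠ 0) : g n s = 0 := by
  have hn := apply_eq_mul_apply_one hg n s
  have hs := apply_eq_mul_apply_one hg s n
  rw [add_comm s n] at hs
  have hsum : ((n + s : ℤ) : ℂ) * g 1 (n + s - 1) = 0 := by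
    push_cast
    linear_combination hg_anti n s - hn - hs
  rw [hn, (mul_eq_zero.mp hsum).resolve_left (Int.cast_ne_zero.mpr hns), mul_zero]

theorem eq_heisenberg (hg_anti : ∀ m n : ℤ, g m n = - g n m)
    (hg : ∀ m n k : ℤ, (k : ℂ) * g n (m + k) - (n : ℂ) * g k (m + n) = 0) :
    ∃ β : ℂ, ∀ m n : ℤ, g m n = β * (m : ℂ) * (if m + n = 0 then 1 else 0) := by
  refine ⟨g 1 (-1), fun m n => ?_⟩
  by_cases hmn : m + n = 0
  · obtain rfl : n = -m := by omega
    rw [if_pos hmn, apply_eq_mul_apply_one hg, add_neg_cancel, zero_sub]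
    ring
  · rw [if_neg hmn, apply_eq_zero_of_add_ne_zero hg_anti hg hmn, mul_zero]

end CurrentCocycle

theorem stmt17_general (f g h : ℤ → ℤ → ℂ)
    (hf_anti : ∀ m n : ℤ, f m n = - f n m)
    (hg_anti : ∀ m n : ℤ, g m n = - g n m)
    (hf : ∀ m n k : ℤ,
      ((n - k : ℤ) : ℂ) * f m (n + k) + ((k - m : ℤ) : ℂ) * f n (k + m)
        + ((m - n : ℤ) : ℂ) * f k (m + n) = 0)
    (hg : ∀ m n k : ℤ,
      (k : ℂ) * g n (m + k) - (n : ℂ) * g k (m + n) = 0)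
    (hh2 : ∀ m n k : ℤ, h k (m + n) = 0) :
    ∃ (α β : ℂ) (φ : ℤ → ℂ),
      (∀ m n : ℤ, f m n =
        (α / 12) * ((m * (m ^ 2 - 1) : ℤ) : ℂ) * (if m + n = 0 then 1 else 0)
          + ((m - n : ℤ) : ℂ) * φ (m + n)) ∧
      (∀ m n : ℤ, g m n = β * (m : ℂ) * (if m + n = 0 then 1 else 0)) ∧
      (∀ m n : ℤ, h m n = 0) := by
  obtain ⟨φ, hφ⟩ := IsWittCocycle.eq_virasoro_add_coboundary ⟨hf_anti, hf⟩
  obtain ⟨β, hβ⟩ := CurrentCocycle.eq_heisenberg hg_anti hg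
  exact ⟨_, β, φ, hφ, hβ, fun m n => by simpa using hh2 0 n m⟩

/-- Classification of central extensions of the novel algebra `𝔤̌`: every central
extension of the form `[L_m,L_n] = (m-n)L_{m+n} + f(m,n)z`, `[J_m,J_n] = g(m,n)z`,
`[Θ_m,Θ_n] = h(m,n)z` is, up to equivalence (a coboundary `φ` in the `L`-sector),
given by the Virasoro cocycle with charge `α`, the Heisenberg cocycle with charge
`β`, and `h = 0`. -/
theorem stmt17 (f g h : ℤ → ℤ → ℂ)
    (hf_anti : ∀ m n : ℤ, f m n = - f n m)
    (hg_anti : ∀ m n : ℤ, g m n = - g n m)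
    (hf : ∀ m n k : ℤ,
      ((n - k : ℤ) : ℂ) * f m (n + k) + ((k - m : ℤ) : ℂ) * f n (k + m)
        + ((m - n : ℤ) : ℂ) * f k (m + n) = 0)
    (hg : ∀ m n k : ℤ,
      (k : ℂ) * g n (m + k) - (n : ℂ) * g k (m + n) = 0)
    (hh1 : ∀ m n k : ℤ,
      ((2 * m - k : ℤ) : ℂ) * h n (m + k) - ((2 * m - n : ℤ) : ℂ) * h k (m + n) = 0)
    (hh2 : ∀ m n k : ℤ, h k (m + n) = 0) :
    ∃ (α β : ℂ) (φ : ℤ → ℂ),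
      (∀ m n : ℤ, f m n =
        (α / 12) * ((m * (m ^ 2 - 1) : ℤ) : ℂ) * (if m + n = 0 then 1 else 0)
          + ((m - n : ℤ) : ℂ) * φ (m + n)) ∧
      (∀ m n : ℤ, g m n = β * (m : ℂ) * (if m + n = 0 then 1 else 0)) ∧
      (∀ m n : ℤ, h m n = 0) :=
  stmt17_general f g h hf_anti hg_anti hf hg hh2
end

section
/- Let f : ℤ × ℤ → ℂ be antisymmetric and satisfy the Virasoro 2-cocycle condition (n-k)f(m,n+k) + (k-m)f(n,k+m) + (m-n)f(k,m+n) = 0 for all m,n,k ∈ ℤ. Then there exist constants α ∈ ℂ and a function g : ℤ → ℂ such that f(m,n) = (α/12)m(m²-1)δ_{m+n,0} + (m-n)g(m+n); i.e. every 2-cocycle on the Witt algebra is cohomologous to the standard Virasoro cocycle. -/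
/-- Every 2-cocycle on the Witt algebra is cohomologous to the standard
Virasoro cocycle `(α/12)·m(m²-1)·δ_{m+n,0}`. -/
theorem stmt18 (f : ℤ → ℤ → ℂ) (hanti : ∀ m n : ℤ, f m n = - f n m)
    (hcocycle : ∀ m n k : ℤ,
      ((n - k : ℤ) : ℂ) * f m (n + k) + ((k - m : ℤ) : ℂ) * f n (k + m)
        + ((m - n : ℤ) : ℂ) * f k (m + n) = 0) :
    ∃ (α : ℂ) (g : ℤ → ℂ), ∀ m n : ℤ,
      f m n = (α / 12) * ((m * (m ^ 2 - 1) : ℤ) : ℂ) * (if m + n = 0 then 1 else 0)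
        + ((m - n : ℤ) : ℂ) * g (m + n) := by
  have h0 : f 0 0 = 0 := by linear_combination (hanti 0 0) / 2
  set a : ℂ := (f 2 (-2) - 2 * f 1 (-1)) / 6 with ha
  set b : ℂ := f 1 (-1) - a with hb
  -- the diagonal part is an odd cubic polynomial
  have claim : ∀ n : ℕ, f (n : ℤ) (-(n : ℤ)) = a * (n : ℂ)^3 + b * (n : ℂ) := by
    intro n
    induction n using Nat.strong_induction_on with
    | _ n ih =>
      match n with
      | 0 => simpa using h0
      | 1 => push_cast; rw [hb]; ring
      | 2 => push_cast; rw [hb, ha]; ring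
      | (n+3) =>
        have hm := hcocycle ((n : ℤ) + 2) 1 (-((n : ℤ) + 3))
        have e2' : ((n:ℤ) + 2) + 1 = (n : ℤ) + 3 := by ring
        have e1 : f (-((n : ℤ) + 3)) (((n:ℤ)+2) + 1) = - f ((n : ℤ) + 3) (-((n : ℤ) + 3)) := by
          rw [hanti, e2']
        have ih2 := ih (n + 2) (by omega)
        have hne : ((n : ℂ) + 1) ≠ 0 := by
          have := Nat.cast_add_one_ne_zero (R := ℂ) n
          exact_mod_cast this
        have e3 : (1 : ℤ) + -((n:ℤ)+3) = -((n:ℤ)+2) := by ring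
        have e4 : -((n:ℤ)+3) + ((n:ℤ)+2) = -1 := by ring
        rw [e3, e4, e1] at hm
        push_cast at hm ih2
        have h1 : f 1 (-1) = a + b := by rw [hb]; ring
        have key : ((n:ℂ) + 1) * f ((n:ℤ) + 3) (-((n:ℤ) + 3))
            = ((n:ℂ) + 1) * (a * ((n:ℂ)+3)^3 + b * ((n:ℂ)+3)) := by
          linear_combination (-1 : ℂ) * hm + ((n:ℂ)+4) * ih2 + (-(2*(n:ℂ)+5)) * h1
        have := mul_left_cancel₀ hne key
        push_cast
        convert this using 2
  have L1 : ∀ m : ℤ, f m (-m) = a * (m : ℂ)^3 + b * (m : ℂ) := by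
    intro m
    rcases le_or_gt 0 m with hm | hm
    · obtain ⟨n, rfl⟩ := Int.eq_ofNat_of_zero_le hm
      exact_mod_cast claim n
    · obtain ⟨n, rfl⟩ : ∃ n : ℕ, m = -(n : ℤ) := ⟨m.natAbs, by omega⟩
      have e5 : -(-(n:ℤ)) = (n:ℤ) := by ring
      rw [e5, hanti, claim n]
      push_cast; ring
  refine ⟨12 * a, fun s => if s = 0 then (a + b) / 2 else -f 0 s / (s : ℂ), fun m n => ?_⟩
  by_cases hmn : m + n = 0
  · have hn : n = -m := by omega
    subst hn
    simp only [add_neg_cancel, if_pos rfl]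
    rw [L1 m]; push_cast; ring
  · have key := hcocycle m n 0
    have e1 : f n (0 + m) = - f m n := by rw [hanti, zero_add]
    simp only [add_zero, sub_zero, zero_sub, e1] at key
    push_cast at key
    have hne : ((m : ℂ) + (n : ℂ)) ≠ 0 := by
      have : ((m + n : ℤ) : ℂ) ≠ 0 := Int.cast_ne_zero.mpr hmn
      push_cast at this; exact this
    have key2 : f m n = ((m:ℂ) - (n:ℂ)) * (- f 0 (m + n)) / ((m:ℂ) + (n:ℂ)) := by
      rw [eq_div_iff hne]; linear_combination key
    simp only [if_neg hmn]
    rw [key2]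
    push_cast
    ring
end
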